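/- Let Q be a finite maximal prefix code over the two-letter alphabet {0,1} and let i ∈ {0,1,2}. Suppose there exist two distinct words v, w ∈ {0,1}*, each a strict prefix of some element of Q, such that |v| ≡ |w| ≡ i (mod 3) and each of v, w is a one-child vertex of the inner tree of Q (i.e., exactly one of v0, v1 is a strict prefix of an element of Q, and exactly one of w0, w1 is a strict prefix of an element of Q). Then there exists a finite maximal prefix code P over {0,1} with the same mod 3 cardinality as Q, and a word u ∈ {0,1}* with |u| ≡ i (mod 3) such that both u0 and u1 belong to P. -/
import Mathlib


/-- A prefix code: no element is a strict prefix of another element. -/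
def PrefixCode (C : Set (List Bool)) : Prop :=
  ∀ u ∈ C, ∀ v ∈ C, u <+: v → u = v

/-- A maximal prefix code over {0,1}:
a prefix code that is not a strict subset of any other prefix code. -/
def MaxPrefixCode (C : Set (List Bool)) : Prop :=
  PrefixCode C ∧ ∀ D : Set (List Bool), PrefixCode D → C ⊆ D → D = C

/-- The strict prefixes of elements of `Q`, i.e. the vertices of the inner tree
of the prefix tree of `Q` (the letter 0 is `false`, the letter 1 is `true`). -/
def strictPrefixes (Q : Set (List Bool)) : Set (List Bool) :=
  {u | ∃ q ∈ Q, u <+: q ∧ u ≠ q}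

lemma sp_not_mem {Q : Set (List Bool)} (hpc : PrefixCode Q) {u : List Bool}
    (hu : u ∈ strictPrefixes Q) : u ∉ Q := by
  obtain ⟨q, hq, hpre, hne⟩ := hu
  intro huQ
  exact hne (hpc u huQ q hq hpre)

lemma not_mem_prefix_sp {Q : Set (List Bool)} (hpc : PrefixCode Q) {q u : List Bool}
    (hq : q ∈ Q) (hu : u ∈ strictPrefixes Q) : ¬ q <+: u := by
  obtain ⟨q', hq', hpre, hne⟩ := hu
  intro h
  have hqq' : q = q' := hpc q hq q' hq' (h.trans hpre)
  subst hqq'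
  exact hne (List.IsPrefix.eq_of_length hpre (le_antisymm hpre.length_le h.length_le))

lemma complete_of_max {Q : Set (List Bool)} (hQ : MaxPrefixCode Q) :
    ∀ z : List Bool, ∃ q ∈ Q, q <+: z ∨ z <+: q := by
  intro z
  by_contra h
  push_neg at h
  have hD : PrefixCode (insert z Q) := by
    intro u hu u' hu' hpre
    rcases hu with rfl | hu
    · rcases hu' with rfl | hu'
      · rfl
      · exact absurd hpre (h u' hu').2
    · rcases hu' with rfl | hu'
      · exact absurd hpre (h u hu).1
      · exact hQ.1 u hu u' hu' hpre
  have := hQ.2 (insert z Q) hD (Set.subset_insert _ _)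
  have hz : z ∈ Q := this ▸ Set.mem_insert z Q
  exact (h z hz).1 (List.prefix_refl z)

lemma max_of_complete {P : Set (List Bool)} (hpc : PrefixCode P)
    (hc : ∀ z : List Bool, ∃ p ∈ P, p <+: z ∨ z <+: p) : MaxPrefixCode P := by
  refine ⟨hpc, fun D hD hsub => Set.Subset.antisymm (fun d hd => ?_) hsub⟩
  obtain ⟨p, hp, hcase⟩ := hc d
  rcases hcase with h | h
  · have : p = d := hD p (hsub hp) d hd h
    exact this ▸ hp
  · have : d = p := hD d hd p (hsub hp) h
    exact this ▸ hp

lemma childInQ {Q : Set (List Bool)} (hpc : PrefixCode Q)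
    (hcomp : ∀ z : List Bool, ∃ q ∈ Q, q <+: z ∨ z <+: q)
    {v : List Bool} (hv : v ∈ strictPrefixes Q) (x : Bool)
    (hnx : v ++ [x] ∉ strictPrefixes Q) : v ++ [x] ∈ Q := by
  obtain ⟨q, hq, hcase⟩ := hcomp (v ++ [x])
  rcases hcase with h | h
  · rcases eq_or_ne q (v ++ [x]) with rfl | hne
    · exact hq
    · -- q is a strict prefix of v ++ [x], so q <+: v
      have hlen : q.length ≤ v.length := by
        have := h.length_le
        simp only [List.length_append, List.length_singleton] at this
        rcases Nat.lt_or_ge q.length (v.length + 1) with h1 | h1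
        · omega
        · exfalso; exact hne (List.IsPrefix.eq_of_length h (by
            simp only [List.length_append, List.length_singleton]; omega))
      have hqv : q <+: v := List.prefix_of_prefix_length_le h (List.prefix_append v [x]) hlen
      exact absurd hqv (not_mem_prefix_sp hpc hq hv)
  · rcases eq_or_ne (v ++ [x]) q with rfl | hne
    · exact hq
    · exact absurd ⟨q, hq, h, hne⟩ hnx

lemma graft_lemma (Q : Set (List Bool)) (hQfin : Q.Finite) (hpc : PrefixCode Q)
    (hcomp : ∀ z : List Bool, ∃ q ∈ Q, q <+: z ∨ z <+: q)
    (b l : List Bool) (hb : b ∈ strictPrefixes Q) (hlQ : l ∈ Q)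
    (hlen3 : b.length % 3 = l.length % 3)
    (hnbl : ¬ b <+: l) :
    ∃ P : Set (List Bool), P.Finite ∧ MaxPrefixCode P ∧
      (∀ j : ℕ, {p ∈ P | p.length % 3 = j}.ncard = {q ∈ Q | q.length % 3 = j}.ncard) ∧
      b ∈ P ∧ ∀ q ∈ Q, ¬ b <+: q → q ≠ l → q ∈ P := by
  classical
  have hbQ : b ∉ Q := sp_not_mem hpc hb
  have hnlb : ¬ l <+: b := not_mem_prefix_sp hpc hlQ hb
  obtain ⟨q0, hq0Q, hq0pre, hq0ne⟩ := hb
  have hb' : b ∈ strictPrefixes Q := ⟨q0, hq0Q, hq0pre, hq0ne⟩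
  obtain ⟨x0, rfl⟩ := hq0pre
  have hx0ne : x0 ≠ [] := by rintro rfl; exact hq0ne (by simp)
  set f : List Bool → List Bool :=
    fun q => if q = l then b else if b <+: q then l ++ q.drop b.length else q with hfdef
  set P : Set (List Bool) := f '' Q with hPdef
  have hfl : f l = b := by simp [hfdef]
  have hfgraft : ∀ x : List Bool, f (b ++ x) = l ++ x := by
    intro x
    have h1 : b ++ x ≠ l := by intro h; exact hnbl (h ▸ List.prefix_append b x)
    simp only [hfdef, if_neg h1, if_pos (List.prefix_append b x), List.drop_left]
  have hfplain : ∀ q, q ≠ l → ¬ b <+: q → f q = q := by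
    intro q h1 h2; simp only [hfdef, if_neg h1, if_neg h2]
  have hmem : ∀ p, p ∈ P ↔
      (p = b ∨ (∃ x, x ≠ [] ∧ b ++ x ∈ Q ∧ p = l ++ x) ∨ (p ∈ Q ∧ ¬ b <+: p ∧ p ≠ l)) := by
    intro p
    constructor
    · rintro ⟨q, hq, rfl⟩
      rcases eq_or_ne q l with rfl | hql
      · exact Or.inl hfl
      · by_cases hbq : b <+: q
        · obtain ⟨x, rfl⟩ := hbq
          have hx : x ≠ [] := by rintro rfl; exact hbQ (by simpa using hq)
          exact Or.inr (Or.inl ⟨x, hx, hq, hfgraft x⟩)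
        · rw [hfplain q hql hbq]; exact Or.inr (Or.inr ⟨hq, hbq, hql⟩)
    · rintro (rfl | ⟨x, hx, hxQ, rfl⟩ | ⟨hq, h1, h2⟩)
      · exact ⟨l, hlQ, hfl⟩
      · exact ⟨b ++ x, hxQ, hfgraft x⟩
      · exact ⟨p, hq, hfplain p h2 h1⟩
  have hPpc : PrefixCode P := by
    intro p1 h1 p2 h2 hpre
    rw [hmem] at h1 h2
    rcases h1 with rfl | ⟨x1, hx1, hx1Q, rfl⟩ | ⟨hq1, hnb1, hnl1⟩
    · rcases h2 with rfl | ⟨x2, hx2, hx2Q, rfl⟩ | ⟨hq2, hnb2, hnl2⟩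
      · rfl
      · exfalso
        rcases le_or_gt p1.length l.length with h3 | h3
        · exact hnbl (List.prefix_of_prefix_length_le hpre (List.prefix_append l x2) h3)
        · exact hnlb (List.prefix_of_prefix_length_le (List.prefix_append l x2) hpre h3.le)
      · exact absurd hpre hnb2
    · rcases h2 with rfl | ⟨x2, hx2, hx2Q, rfl⟩ | ⟨hq2, hnb2, hnl2⟩
      · exact absurd ((List.prefix_append l x1).trans hpre) hnlb
      · obtain ⟨t, ht⟩ := hpre
        rw [List.append_assoc] at ht
        have hx12 : x1 ++ t = x2 := List.append_cancel_left ht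
        have heq : b ++ x1 = b ++ x2 :=
          hpc _ hx1Q _ hx2Q ⟨t, by rw [List.append_assoc, hx12]⟩
        rw [List.append_cancel_left heq]
      · exfalso
        have : l = p2 := hpc l hlQ p2 hq2 ((List.prefix_append l x1).trans hpre)
        exact hnl2 this.symm
    · rcases h2 with rfl | ⟨x2, hx2, hx2Q, rfl⟩ | ⟨hq2, hnb2, hnl2⟩
      · exact absurd hpre (not_mem_prefix_sp hpc hq1 hb')
      · exfalso
        rcases le_or_gt p1.length l.length with h3 | h3
        · exact hnl1 (hpc p1 hq1 l hlQ
            (List.prefix_of_prefix_length_le hpre (List.prefix_append l x2) h3))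
        · have : l = p1 := hpc l hlQ p1 hq1
            (List.prefix_of_prefix_length_le (List.prefix_append l x2) hpre h3.le)
          rw [← this] at h3; omega
      · exact hpc p1 hq1 p2 hq2 hpre
  have hbP : b ∈ P := (hmem b).2 (Or.inl rfl)
  have hPcomp : ∀ z : List Bool, ∃ p ∈ P, p <+: z ∨ z <+: p := by
    intro z
    obtain ⟨q, hqQ, hq⟩ := hcomp z
    by_cases hql : q = l
    · rw [hql] at hq
      rcases hq with h | h
      · obtain ⟨y, rfl⟩ := h
        obtain ⟨q', hq'Q, hq'⟩ := hcomp (b ++ y)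
        rcases hq' with h' | h'
        · rcases le_or_gt q'.length b.length with h3 | h3
          · exact absurd (List.prefix_of_prefix_length_le h' (List.prefix_append b y) h3)
              (not_mem_prefix_sp hpc hq'Q hb')
          · have hbq' : b <+: q' := List.prefix_of_prefix_length_le
              (List.prefix_append b y) h' h3.le
            obtain ⟨x, rfl⟩ := hbq'
            have hx : x ≠ [] := by rintro rfl; exact hbQ (by simpa using hq'Q)
            obtain ⟨t, ht⟩ := h'
            rw [List.append_assoc] at ht
            have hxy : x ++ t = y := List.append_cancel_left ht
            refine ⟨l ++ x, (hmem _).2 (Or.inr (Or.inl ⟨x, hx, hq'Q, rfl⟩)), Or.inl ⟨t, ?_⟩⟩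
            rw [List.append_assoc, hxy]
        · obtain ⟨t, rfl⟩ := h'
          have hq'Q' : b ++ (y ++ t) ∈ Q := by rw [← List.append_assoc]; exact hq'Q
          have hx : y ++ t ≠ [] := by
            intro h
            apply hbQ; rw [h] at hq'Q'; simpa using hq'Q'
          exact ⟨l ++ (y ++ t), (hmem _).2 (Or.inr (Or.inl ⟨y ++ t, hx, hq'Q', rfl⟩)),
            Or.inr ⟨t, List.append_assoc l y t⟩⟩
      · exact ⟨l ++ x0, (hmem _).2 (Or.inr (Or.inl ⟨x0, hx0ne, hq0Q, rfl⟩)),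
          Or.inr (h.trans (List.prefix_append l x0))⟩
    · by_cases hbq : b <+: q
      · rcases hq with h | h
        · exact ⟨b, hbP, Or.inl (hbq.trans h)⟩
        · rcases le_or_gt z.length b.length with h3 | h3
          · exact ⟨b, hbP, Or.inr (List.prefix_of_prefix_length_le h hbq h3)⟩
          · exact ⟨b, hbP, Or.inl (List.prefix_of_prefix_length_le hbq h h3.le)⟩
      · exact ⟨q, (hmem q).2 (Or.inr (Or.inr ⟨hqQ, hbq, hql⟩)), hq⟩
  set g : List Bool → List Bool :=
    fun p => if p = b then l else if l <+: p then b ++ p.drop l.length else p with hgdef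
  have hgf : ∀ q ∈ Q, g (f q) = q := by
    intro q hq
    rcases eq_or_ne q l with rfl | hql
    · rw [hfl]; simp [hgdef]
    · by_cases hbq : b <+: q
      · obtain ⟨x, rfl⟩ := hbq
        rw [hfgraft]
        have h1 : l ++ x ≠ b := by intro h; exact hnlb (h ▸ List.prefix_append l x)
        simp only [hgdef, if_neg h1, if_pos (List.prefix_append l x), List.drop_left]
      · rw [hfplain q hql hbq]
        have h1 : q ≠ b := by rintro rfl; exact hbQ hq
        have h2 : ¬ l <+: q := by
          intro h; exact hql (hpc l hlQ q hq h).symm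
        simp only [hgdef, if_neg h1, if_neg h2]
  have hinj : Set.InjOn f Q := by
    intro q1 h1 q2 h2 heq
    rw [← hgf q1 h1, ← hgf q2 h2, heq]
  have hflen : ∀ q ∈ Q, (f q).length % 3 = q.length % 3 := by
    intro q hq
    rcases eq_or_ne q l with rfl | hql
    · rw [hfl]; omega
    · by_cases hbq : b <+: q
      · obtain ⟨x, rfl⟩ := hbq
        rw [hfgraft]
        simp only [List.length_append]
        omega
      · rw [hfplain q hql hbq]
  have hcard : ∀ j : ℕ,
      {p ∈ P | p.length % 3 = j}.ncard = {q ∈ Q | q.length % 3 = j}.ncard := by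
    intro j
    have himg : {p ∈ P | p.length % 3 = j} = f '' {q ∈ Q | q.length % 3 = j} := by
      ext p
      constructor
      · rintro ⟨⟨q, hq, rfl⟩, hlen⟩
        exact ⟨q, ⟨hq, by rw [← hflen q hq]; exact hlen⟩, rfl⟩
      · rintro ⟨q, ⟨hq, hlen⟩, rfl⟩
        exact ⟨⟨q, hq, rfl⟩, by rw [hflen q hq]; exact hlen⟩
    rw [himg, Set.ncard_image_of_injOn (hinj.mono (fun q hq => hq.1))]
  exact ⟨P, hQfin.image f, max_of_complete hPpc hPcomp, hcard, hbP,
    fun q hq h1 h2 => (hmem q).2 (Or.inr (Or.inr ⟨hq, h1, h2⟩))⟩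


lemma main_aux (Q : Set (List Bool)) (hQfin : Q.Finite) (hpc : PrefixCode Q)
    (hcomp : ∀ z : List Bool, ∃ q ∈ Q, q <+: z ∨ z <+: q)
    (i : ℕ) (v w : List Bool) (hvw : v ≠ w)
    (hvlen : v.length % 3 = i) (hwlen : w.length % 3 = i) (cv cw : Bool)
    (hbv : v ++ [cv] ∈ strictPrefixes Q) (hlv : v ++ [!cv] ∈ Q)
    (hlw : w ++ [!cw] ∈ Q)
    (hnp : ¬ v ++ [cv] <+: w) :
    ∃ P : Set (List Bool), P.Finite ∧ MaxPrefixCode P ∧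
      (∀ j : ℕ, {p ∈ P | p.length % 3 = j}.ncard = {q ∈ Q | q.length % 3 = j}.ncard) ∧
      ∃ u : List Bool, u.length % 3 = i ∧ u ++ [false] ∈ P ∧ u ++ [true] ∈ P := by
  have hbQ : v ++ [cv] ∉ Q := sp_not_mem hpc hbv
  have hnbl : ¬ (v ++ [cv]) <+: (w ++ [!cw]) := by
    intro h
    rcases le_or_gt (v ++ [cv]).length w.length with h1 | h1
    · exact hnp (List.prefix_of_prefix_length_le h (List.prefix_append w [!cw]) h1)
    · have heq : v ++ [cv] = w ++ [!cw] := List.IsPrefix.eq_of_length h (by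
        have := h.length_le
        simp only [List.length_append, List.length_singleton] at *
        omega)
      exact hbQ (heq ▸ hlw)
  have hlen3 : (v ++ [cv]).length % 3 = (w ++ [!cw]).length % 3 := by
    simp only [List.length_append, List.length_singleton]
    omega
  obtain ⟨P, hPfin, hPmax, hPcard, hbP, hkeep⟩ :=
    graft_lemma Q hQfin hpc hcomp (v ++ [cv]) (w ++ [!cw]) hbv hlw hlen3 hnbl
  have hleafP : v ++ [!cv] ∈ P := by
    apply hkeep _ hlv
    · intro h
      have heq : v ++ [cv] = v ++ [!cv] := List.IsPrefix.eq_of_length h (by simp)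
      have := List.append_cancel_left heq
      simp at this
    · intro h
      apply hvw
      have hlen : v.length = w.length := by
        have := congrArg List.length h
        simp only [List.length_append, List.length_singleton] at this
        omega
      have h2 := congrArg (List.take v.length) h
      rw [List.take_left] at h2
      rw [hlen, List.take_left] at h2
      exact h2
  refine ⟨P, hPfin, hPmax, hPcard, v, hvlen, ?_, ?_⟩
  · cases cv
    · exact hbP
    · simpa using hleafP
  · cases cv
    · simpa using hleafP
    · exact hbP

theorem statement15 (Q : Set (List Bool)) (hQfin : Q.Finite) (hQ : MaxPrefixCode Q)
    (i : ℕ) (hi : i < 3) (v w : List Bool) (hvw : v ≠ w)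
    (hv : v ∈ strictPrefixes Q) (hw : w ∈ strictPrefixes Q)
    (hvlen : v.length % 3 = i) (hwlen : w.length % 3 = i)
    (hv1 : Xor' (v ++ [false] ∈ strictPrefixes Q) (v ++ [true] ∈ strictPrefixes Q))
    (hw1 : Xor' (w ++ [false] ∈ strictPrefixes Q) (w ++ [true] ∈ strictPrefixes Q)) :
    ∃ P : Set (List Bool), P.Finite ∧ MaxPrefixCode P ∧
      (∀ j : ℕ, {p ∈ P | p.length % 3 = j}.ncard = {q ∈ Q | q.length % 3 = j}.ncard) ∧
      ∃ u : List Bool, u.length % 3 = i ∧ u ++ [false] ∈ P ∧ u ++ [true] ∈ P := by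
  have hpc : PrefixCode Q := hQ.1
  have hcomp := complete_of_max hQ
  have hvdata : ∃ c : Bool, v ++ [c] ∈ strictPrefixes Q ∧ v ++ [!c] ∈ Q := by
    rcases hv1 with ⟨h1, h2⟩ | ⟨h1, h2⟩
    · exact ⟨false, h1, by simpa using childInQ hpc hcomp hv true h2⟩
    · exact ⟨true, h1, by simpa using childInQ hpc hcomp hv false h2⟩
  have hwdata : ∃ c : Bool, w ++ [c] ∈ strictPrefixes Q ∧ w ++ [!c] ∈ Q := by
    rcases hw1 with ⟨h1, h2⟩ | ⟨h1, h2⟩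
    · exact ⟨false, h1, by simpa using childInQ hpc hcomp hw true h2⟩
    · exact ⟨true, h1, by simpa using childInQ hpc hcomp hw false h2⟩
  obtain ⟨cv, hbv, hlv⟩ := hvdata
  obtain ⟨cw, hbw, hlw⟩ := hwdata
  by_cases hcase : v ++ [cv] <+: w
  · have hnp2 : ¬ w ++ [cw] <+: v := by
      intro h
      have h1 := hcase.length_le
      have h2 := h.length_le
      simp only [List.length_append, List.length_singleton] at h1 h2
      omega
    exact main_aux Q hQfin hpc hcomp i w v (Ne.symm hvw) hwlen hvlen cw cv hbw hlw hlv hnp2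
  · exact main_aux Q hQfin hpc hcomp i v w hvw hvlen hwlen cv cw hbv hlv hlw hcase
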